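/- Let (S, A, δ, Z, o, s₀) be a POMDP with target ⊤ ∈ S, and let δ̃ be the blind MDP transition on action set A × Z given by δ̃(s,(a,z)) := δ(s,a) if o(s) = z and the point mass at s otherwise. For every memoryless policy σ : Z → Δ(A), define the probability distribution τ on A × Z by τ(a,z) := σ(z)(a)/|Z|. Then for every state s ∈ S, ReachProb(P̃_τ, ⊤, s) = ReachProb(P_σ, ⊤, s), where P_σ(s,s') := Σ_a σ(o s)(a) · δ(s,a)(s') and P̃_τ(s,s') := Σ_{(a,z)} τ(a,z) · δ̃(s,(a,z))(s'). -/
import Mathlib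


open scoped BigOperators

/-- Iterates whose supremum is the reachability probability. -/
noncomputable def reachAux {S : Type*} [Fintype S] [DecidableEq S]
    (P : S → S → ℝ) (t : S) : ℕ → S → ℝ
  | 0, x => if x = t then 1 else 0
  | n + 1, x => if x = t then 1 else ∑ y, P x y * reachAux P t n y

/-- Reachability probability of target `t` starting from `s` in the Markov chain `P`. -/
noncomputable def ReachProb {S : Type*} [Fintype S] [DecidableEq S]
    (P : S → S → ℝ) (t s : S) : ℝ :=
  ⨆ n : ℕ, reachAux P t n s

/-- Transition function of the blind MDP associated with a POMDP: action `(a, z)`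
behaves like `a` on states with observation `z` and is a self-loop elsewhere. -/
noncomputable def blindTrans {S A Z : Type*} [DecidableEq S] [DecidableEq Z]
    (δ : S → A → S → ℝ) (o : S → Z) : S → A × Z → S → ℝ :=
  fun s p s' => if o s = p.2 then δ s p.1 s' else if s' = s then 1 else 0

section Aux

open Filter Topology

variable {S : Type*} [Fintype S] [DecidableEq S]

lemma reachAux_nonneg (P : S → S → ℝ) (t : S) (hP0 : ∀ x y, 0 ≤ P x y) :
    ∀ n x, 0 ≤ reachAux P t n x := by
  intro n
  induction n with
  | zero => intro x; simp only [reachAux]; split <;> norm_num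
  | succ n ih =>
    intro x; simp only [reachAux]; split
    · norm_num
    · exact Finset.sum_nonneg fun y _ => mul_nonneg (hP0 x y) (ih y)

lemma reachAux_le_one (P : S → S → ℝ) (t : S) (hP0 : ∀ x y, 0 ≤ P x y)
    (hP1 : ∀ x, ∑ y, P x y = 1) :
    ∀ n x, reachAux P t n x ≤ 1 := by
  intro n
  induction n with
  | zero => intro x; simp only [reachAux]; split <;> norm_num
  | succ n ih =>
    intro x; simp only [reachAux]; split
    · norm_num
    · calc ∑ y, P x y * reachAux P t n y ≤ ∑ y, P x y * 1 :=
            Finset.sum_le_sum fun y _ => mul_le_mul_of_nonneg_left (ih y) (hP0 x y)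
        _ = 1 := by simp [hP1 x]

lemma reachAux_succ_le (P : S → S → ℝ) (t : S) (hP0 : ∀ x y, 0 ≤ P x y) :
    ∀ n x, reachAux P t n x ≤ reachAux P t (n + 1) x := by
  intro n
  induction n with
  | zero =>
    intro x
    simp only [reachAux]
    split
    · norm_num
    · exact Finset.sum_nonneg fun y _ =>
        mul_nonneg (hP0 x y) (reachAux_nonneg P t hP0 0 y)
  | succ n ih =>
    intro x
    simp only [reachAux]
    split
    · norm_num
    · exact Finset.sum_le_sum fun y _ => mul_le_mul_of_nonneg_left (ih y) (hP0 x y)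

lemma reachAux_monotone (P : S → S → ℝ) (t : S) (hP0 : ∀ x y, 0 ≤ P x y) (x : S) :
    Monotone fun n => reachAux P t n x :=
  monotone_nat_of_le_succ fun n => reachAux_succ_le P t hP0 n x

lemma reachAux_bdd (P : S → S → ℝ) (t : S) (hP0 : ∀ x y, 0 ≤ P x y)
    (hP1 : ∀ x, ∑ y, P x y = 1) (x : S) :
    BddAbove (Set.range fun n => reachAux P t n x) := by
  refine ⟨1, ?_⟩
  rintro r ⟨n, rfl⟩
  exact reachAux_le_one P t hP0 hP1 n x

/-- Key lemma: lazifying a Markov chain does not change reachability probabilities. -/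
lemma reachProb_lazy (P : S → S → ℝ) (t : S) (hP0 : ∀ x y, 0 ≤ P x y)
    (hP1 : ∀ x, ∑ y, P x y = 1) (c : ℝ) (hc0 : 0 < c) (hc1 : c ≤ 1) (s : S) :
    ReachProb (fun x y => c * P x y + (1 - c) * (if y = x then 1 else 0)) t s
      = ReachProb P t s := by
  set Q : S → S → ℝ := fun x y => c * P x y + (1 - c) * (if y = x then 1 else 0) with hQ
  have hQ0 : ∀ x y, 0 ≤ Q x y := by
    intro x y
    have h1 : (0:ℝ) ≤ if y = x then (1:ℝ) else 0 := by split <;> norm_num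
    exact add_nonneg (mul_nonneg hc0.le (hP0 x y))
      (mul_nonneg (by linarith) h1)
  have hQsum : ∀ (x : S) (f : S → ℝ),
      ∑ y, Q x y * f y = c * (∑ y, P x y * f y) + (1 - c) * f x := by
    intro x f
    have : ∀ y, Q x y * f y
        = c * (P x y * f y) + (1 - c) * (if y = x then f y else 0) := by
      intro y; simp only [hQ]; split <;> ring
    rw [Finset.sum_congr rfl fun y _ => this y, Finset.sum_add_distrib,
      ← Finset.mul_sum, ← Finset.mul_sum, Finset.sum_ite_eq' Finset.univ x f]
    simp
  have hQ1 : ∀ x, ∑ y, Q x y = 1 := by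
    intro x
    have := hQsum x (fun _ => 1)
    simpa [hP1 x] using this
  -- the function value at target is 1 for all iterates of both chains
  have hQt : ∀ n, reachAux Q t n t = 1 := by
    intro n; cases n <;> simp [reachAux]
  -- limit function of the lazy chain
  set L : S → ℝ := fun x => ⨆ n, reachAux Q t n x with hL
  have hLt : L t = 1 := by
    simp only [hL]
    rw [show (fun n => reachAux Q t n t) = fun _ => (1:ℝ) from funext hQt]
    exact ciSup_const
  have hL0 : ∀ x, 0 ≤ L x := by
    intro x
    exact le_trans (reachAux_nonneg Q t hQ0 0 x)
      (le_ciSup (reachAux_bdd Q t hQ0 hQ1 x) 0)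
  have hL1 : ∀ x, L x ≤ 1 := fun x =>
    ciSup_le fun n => reachAux_le_one Q t hQ0 hQ1 n x
  have hLtend : ∀ x, Filter.Tendsto (fun n => reachAux Q t n x) atTop (𝓝 (L x)) :=
    fun x => tendsto_atTop_ciSup (reachAux_monotone Q t hQ0 x)
      (reachAux_bdd Q t hQ0 hQ1 x)
  -- fixed point property of L for the original chain
  have hfix : ∀ x, x ≠ t → L x = ∑ y, P x y * L y := by
    intro x hx
    have h1 : Filter.Tendsto (fun n => reachAux Q t (n + 1) x) atTop (𝓝 (L x)) :=
      (hLtend x).comp (Filter.tendsto_add_atTop_nat 1)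
    have h2 : Filter.Tendsto (fun n => ∑ y, Q x y * reachAux Q t n y) atTop
        (𝓝 (∑ y, Q x y * L y)) := by
      refine tendsto_finset_sum _ fun y _ => ?_
      exact (hLtend y).const_mul _
    have heq : (fun n => reachAux Q t (n + 1) x)
        = fun n => ∑ y, Q x y * reachAux Q t n y := by
      funext n; simp [reachAux, hx]
    rw [heq] at h1
    have hLfix : L x = ∑ y, Q x y * L y := tendsto_nhds_unique h1 h2
    have := hQsum x L
    rw [this] at hLfix
    have hc : c * L x = c * ∑ y, P x y * L y := by linarith
    exact mul_left_cancel₀ hc0.ne' hc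
  -- original iterates are below L
  have hPleL : ∀ n x, reachAux P t n x ≤ L x := by
    intro n
    induction n with
    | zero =>
      intro x
      simp only [reachAux]
      split
      · subst ‹x = t›; rw [hLt]
      · exact hL0 x
    | succ n ih =>
      intro x
      simp only [reachAux]
      split
      · subst ‹x = t›; rw [hLt]
      · rw [hfix x ‹¬ x = t›]
        exact Finset.sum_le_sum fun y _ => mul_le_mul_of_nonneg_left (ih y) (hP0 x y)
  -- lazy iterates are below original iterates
  have hQleP : ∀ n x, reachAux Q t n x ≤ reachAux P t n x := by
    intro n
    induction n with
    | zero => intro x; simp [reachAux]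
    | succ n ih =>
      intro x
      simp only [reachAux]
      split
      · norm_num
      · have h1 : ∑ y, Q x y * reachAux Q t n y ≤ ∑ y, Q x y * reachAux P t n y :=
          Finset.sum_le_sum fun y _ => mul_le_mul_of_nonneg_left (ih y) (hQ0 x y)
        refine h1.trans ?_
        rw [hQsum x (reachAux P t n)]
        have h2 : reachAux P t n x ≤ ∑ y, P x y * reachAux P t n y := by
          have := reachAux_succ_le P t hP0 n x
          simpa [reachAux, ‹¬ x = t›] using this
        nlinarith [Finset.sum_le_sum (fun y (_ : y ∈ Finset.univ) =>
          mul_le_mul_of_nonneg_left (le_refl (reachAux P t n y)) (hP0 x y))]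
  refine le_antisymm ?_ ?_
  · exact ciSup_le fun n => le_trans (hQleP n s)
      (le_ciSup (reachAux_bdd P t hP0 hP1 s) n)
  · exact ciSup_le fun n => hPleL n s

end Aux

/-- Pushing a memoryless POMDP policy `σ` to the blind MDP by choosing an
observation uniformly at random preserves the reachability probability from
every state. -/
theorem pomdp_to_blind_policy
    {S A Z : Type*} [Fintype S] [Fintype A] [Fintype Z]
    [DecidableEq S] [DecidableEq Z]
    [Nonempty S] [Nonempty A] [Nonempty Z]
    (δ : S → A → S → ℝ)
    (hδ : ∀ s a, (∀ s', 0 ≤ δ s a s') ∧ (∑ s', δ s a s') = 1)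
    (o : S → Z) (top : S)
    (σ : Z → A → ℝ) (hσ0 : ∀ z a, 0 ≤ σ z a) (hσ1 : ∀ z, (∑ a, σ z a) = 1)
    (s : S) :
    ReachProb (fun s s' => ∑ p : A × Z,
        (σ p.2 p.1 / (Fintype.card Z : ℝ)) * blindTrans δ o s p s') top s =
    ReachProb (fun s s' => ∑ a, σ (o s) a * δ s a s') top s := by
  set nZ : ℝ := (Fintype.card Z : ℝ) with hnZ
  have hnZpos : 0 < nZ := by
    simp only [hnZ]
    exact_mod_cast Fintype.card_pos
  set c : ℝ := 1 / nZ with hc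
  have hc0 : 0 < c := by positivity
  have hc1 : c ≤ 1 := by
    rw [hc, div_le_one hnZpos]
    simp only [hnZ]
    exact_mod_cast Fintype.card_pos
  set P : S → S → ℝ := fun s s' => ∑ a, σ (o s) a * δ s a s' with hP
  have hP0 : ∀ x y, 0 ≤ P x y := fun x y =>
    Finset.sum_nonneg fun a _ => mul_nonneg (hσ0 _ a) ((hδ x a).1 y)
  have hP1 : ∀ x, ∑ y, P x y = 1 := by
    intro x
    simp only [hP]
    rw [Finset.sum_comm]
    calc ∑ a, ∑ y, σ (o x) a * δ x a y = ∑ a, σ (o x) a * ∑ y, δ x a y := by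
          simp [Finset.mul_sum]
      _ = 1 := by
          rw [Finset.sum_congr rfl fun a _ => by rw [(hδ x a).2, mul_one]]
          exact hσ1 (o x)
  have hmat : (fun s s' => ∑ p : A × Z,
        (σ p.2 p.1 / nZ) * blindTrans δ o s p s')
      = fun x y => c * P x y + (1 - c) * (if y = x then 1 else 0) := by
    funext x y
    rw [Fintype.sum_prod_type]
    have hterm : ∀ (a : A) (z : Z), (σ z a / nZ) * blindTrans δ o x (a, z) y
        = (if o x = z then (σ z a / nZ) * δ x a y - (σ z a / nZ) * (if y = x then 1 else 0)
            else 0)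
          + (σ z a / nZ) * (if y = x then 1 else 0) := by
      intro a z
      simp only [blindTrans]
      split <;> ring
    calc ∑ a, ∑ z, (σ z a / nZ) * blindTrans δ o x (a, z) y
        = ∑ a, ((σ (o x) a / nZ) * δ x a y
            - (σ (o x) a / nZ) * (if y = x then 1 else 0)
            + ∑ z, (σ z a / nZ) * (if y = x then 1 else 0)) := by
          refine Finset.sum_congr rfl fun a _ => ?_
          rw [Finset.sum_congr rfl fun z _ => hterm a z, Finset.sum_add_distrib,
            Finset.sum_ite_eq Finset.univ (o x)
              (fun z => (σ z a / nZ) * δ x a y - (σ z a / nZ) * (if y = x then 1 else 0))]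
          simp [sub_eq_add_neg]
      _ = c * P x y + (1 - c) * (if y = x then 1 else 0) := by
          simp only [Finset.sum_add_distrib, Finset.sum_sub_distrib]
          have e1 : ∑ a, σ (o x) a / nZ * δ x a y = c * P x y := by
            rw [hP, Finset.mul_sum]
            refine Finset.sum_congr rfl fun a _ => ?_
            rw [hc]; ring
          have e2 : ∑ a, σ (o x) a / nZ * (if y = x then 1 else 0)
              = c * (if y = x then 1 else 0) := by
            rw [← Finset.sum_mul, ← Finset.sum_div, hσ1, hc]
          have e3 : ∑ a, ∑ z, σ z a / nZ * (if y = x then 1 else 0)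
              = (if y = x then 1 else 0) := by
            rw [Finset.sum_comm]
            calc ∑ z, ∑ a, σ z a / nZ * (if y = x then 1 else 0)
                = ∑ z : Z, (1 / nZ) * (if y = x then 1 else 0) := by
                  refine Finset.sum_congr rfl fun z _ => ?_
                  rw [← Finset.sum_mul, ← Finset.sum_div, hσ1]
              _ = (if y = x then 1 else 0) := by
                  rw [Finset.sum_const, Finset.card_univ, nsmul_eq_mul, hnZ]
                  field_simp
          rw [e1, e2, e3]; ring
  rw [hmat]
  exact reachProb_lazy P top hP0 hP1 c hc0 hc1 s
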